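/- arXiv:1110.5098 — 4 statements merged into one kernel-verified Lean document; each statement's English description precedes it below -/
import Mathlib

section
/- (Network service concatenation) If D_h(t) ≥ inf_{0 ≤ s ≤ t} [A_h(s) + S_h(s,t)] for each hop h = 1, ..., H, where A_1 = A and A_{h+1} = D_h, then D_H(t) ≥ inf_{0 ≤ k_1 ≤ ... ≤ k_H ≤ t} [A(k_1) + S_1(k_1,k_2) + ... + S_H(k_H, t)], i.e. the end-to-end service is the (min,+) convolution S_1 ⊗ S_2 ⊗ ... ⊗ S_H. -/
/-- Network service concatenation: if at each hop `h < H` the departures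
dominate the (min,+) convolution of that hop's arrivals with its service,
`D_h(t) ≥ inf_{0 ≤ s ≤ t} (A_h(s) + S_h(s,t))`, where `A_0 = A` and
`A_{h+1} = D_h`, then the end-to-end departures dominate the (min,+)
convolution of `A` with `S_0 ⊗ S_1 ⊗ ... ⊗ S_{H-1}`. -/
theorem network_service_concatenation (H : ℕ) (hH : 0 < H)
    (A : ℕ → ℝ) (S : ℕ → ℕ → ℕ → ℝ) (D : ℕ → ℕ → ℝ) (Aseq : ℕ → ℕ → ℝ)
    (hA0 : Aseq 0 = A) (hAstep : ∀ h < H, Aseq (h + 1) = D h)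
    (hD : ∀ h < H, ∀ t, (⨅ s : Fin (t + 1), (Aseq h s + S h s t)) ≤ D h t)
    (t : ℕ) :
    (⨅ k : {k : Fin (H + 1) → ℕ // Monotone k ∧ k (Fin.last H) = t},
        (A (k.1 0) + ∑ i : Fin H, S i (k.1 i.castSucc) (k.1 i.succ))) ≤
      D (H - 1) t := by
  -- step lemma
  have step : ∀ h < H, ∀ u : ℕ, ∃ s ≤ u, Aseq h s + S h s u ≤ D h u := by
    intro h hh u
    obtain ⟨x, hx⟩ := Finite.exists_min (fun s : Fin (u + 1) => Aseq h s + S h s u)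
    refine ⟨x, Nat.lt_succ_iff.mp x.isLt, ?_⟩
    exact le_trans (le_ciInf hx) (hD h hh u)
  -- main induction
  have main : ∀ n, 1 ≤ n → n ≤ H → ∀ u : ℕ,
      ∃ k : Fin (n + 1) → ℕ, Monotone k ∧ k (Fin.last n) = u ∧
        A (k 0) + ∑ i : Fin n, S i (k i.castSucc) (k i.succ) ≤ D (n - 1) u := by
    intro n
    induction n with
    | zero => omega
    | succ m ih =>
      intro _ hmH u
      rcases Nat.eq_zero_or_pos m with hm | hm
      · subst hm
        obtain ⟨s, hsu, hs⟩ := step 0 hH u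
        refine ⟨![s, u], ?_, rfl, ?_⟩
        · intro a b hab
          fin_cases a <;> fin_cases b <;> simp_all
        · simpa [hA0] using hs
      · obtain ⟨s, hsu, hs⟩ := step m (by omega) u
        obtain ⟨k, hmono, hlast, hval⟩ := ih hm (by omega) s
        rw [show Aseq m = D (m - 1) by
          have := hAstep (m - 1) (by omega); rwa [Nat.sub_add_cancel hm] at this] at hs
        refine ⟨Fin.snoc k u, ?_, by simp, ?_⟩
        · rw [Fin.monotone_iff_le_succ]
          intro i
          rcases Fin.eq_castSucc_or_eq_last i with ⟨j, rfl⟩ | rfl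
          · simp only [Fin.succ_castSucc, Fin.snoc_castSucc]
            exact hmono (Fin.castSucc_le_succ j)
          · rw [show (Fin.last m).succ = Fin.last (m+1) from rfl, Fin.snoc_last,
              show ((Fin.last m).castSucc : Fin (m+2)) = Fin.castSucc (Fin.last m) from rfl,
              Fin.snoc_castSucc, hlast]
            exact hsu
        · have h0 : (Fin.snoc k u : Fin (m+2) → ℕ) 0 = k 0 := by
            rw [show (0 : Fin (m+2)) = Fin.castSucc 0 from rfl, Fin.snoc_castSucc]
          rw [h0, Fin.sum_univ_castSucc]
          simp only [Fin.succ_castSucc, Fin.snoc_castSucc, Fin.coe_castSucc,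
            Fin.snoc_last, Fin.succ_last, Fin.val_last, hlast]
          have : D (m + 1 - 1) u = D m u := by norm_num
          rw [this]
          linarith
  obtain ⟨k, hmono, hlast, hval⟩ := main H hH le_rfl t
  haveI : Finite {k : Fin (H + 1) → ℕ // Monotone k ∧ k (Fin.last H) = t} := by
    apply Finite.of_injective (fun k => (fun i => (⟨k.1 i, by
      have := k.2.1 (Fin.le_last i); rw [k.2.2] at this; omega⟩ : Fin (t+1)) : Fin (H+1) → Fin (t+1)))
    intro a b hab
    ext i
    exact congrArg Fin.val (congrFun hab i)
  refine ciInf_le (Set.Finite.bddBelow (Set.finite_range _)) ⟨k, hmono, hlast⟩ |>.trans hval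
end

section
/- (Single-node backlog tail bound) Let A be a stationary arrival process and S a service process at one node with D(t) ≥ (A ⊗ S)(t) pathwise. Then for all t ≥ 0, x ≥ 0 and θ > 0: P(A(t) - D(t) > x) ≤ [Σ_{u=0}^{t} E[e^{θ A(u)}]^{1/2} E[e^{-θ S(u)}]^{1/2}] · e^{-θx/2}. -/
/-!
On the event `A(t) - D(t) > x` the pathwise bound yields some `s ≤ t` with
`A(s,t) - S(s,t) > x`, so a union bound over `s` reduces the claim to a single increment.
For that one, Chernoff's bound at `θ / 2` followed by Cauchy–Schwarz (which needs no
independence between arrivals and service) splits `E[e^{θ/2 (A(s,t) - S(s,t))}]` into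
`E[e^{θ A(s,t)}]^{1/2} E[e^{-θ S(s,t)}]^{1/2}`, and stationarity replaces `(s,t]` by `(0,t-s]`.
-/

open MeasureTheory ProbabilityTheory Real

lemma exp_half_mul_sq (θ a : ℝ) : exp (θ / 2 * a) ^ 2 = exp (θ * a) := by
  rw [← exp_nat_mul]; ring_nf

lemma backlog_subset_biUnion {Ω : Type*} {A D : ℕ → Ω → ℝ} {S : ℕ → ℕ → Ω → ℝ} {t : ℕ} (x : ℝ)
    (hD : ∀ ω, (⨅ s : Fin (t + 1), (A s ω + S s t ω)) ≤ D t ω) :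
    {ω | x < A t ω - D t ω} ⊆
      ⋃ s ∈ Finset.range (t + 1), {ω | x < A t ω - A s ω - S s t ω} := by
  intro ω hω
  obtain ⟨s, hs⟩ := exists_eq_ciInf_of_finite (f := fun s : Fin (t + 1) => A s ω + S s t ω)
  have hsD : A s ω + S s t ω ≤ D t ω := hs ▸ hD ω
  simp only [Set.mem_iUnion, Set.mem_ofPred_eq, Finset.mem_range]
  exact ⟨s, s.isLt, by linarith [show x < A t ω - D t ω from hω]⟩

section ExpMoments

variable {Ω : Type*} [MeasurableSpace Ω] {μ : Measure Ω} {X Y : Ω → ℝ} {θ : ℝ}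

lemma memLp_two_exp_half_mul (hX : AEMeasurable X μ)
    (h : Integrable (fun ω => exp (θ * X ω)) μ) :
    MemLp (fun ω => exp (θ / 2 * X ω)) 2 μ :=
  (memLp_two_iff_integrable_sq (hX.const_mul _).exp.aestronglyMeasurable).2 <| by
    simpa only [exp_half_mul_sq] using h

lemma integrable_exp_half_mul_add (hX : AEMeasurable X μ) (hY : AEMeasurable Y μ)
    (hiX : Integrable (fun ω => exp (θ * X ω)) μ) (hiY : Integrable (fun ω => exp (θ * Y ω)) μ) :
    Integrable (fun ω => exp (θ / 2 * (X + Y) ω)) μ := by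
  simp only [Pi.add_apply, mul_add, exp_add]
  exact (memLp_two_exp_half_mul hX hiX).integrable_mul (memLp_two_exp_half_mul hY hiY)

lemma mgf_add_half_le (hX : AEMeasurable X μ) (hY : AEMeasurable Y μ)
    (hiX : Integrable (fun ω => exp (θ * X ω)) μ) (hiY : Integrable (fun ω => exp (θ * Y ω)) μ) :
    mgf (X + Y) μ (θ / 2) ≤ mgf X μ θ ^ (1 / 2 : ℝ) * mgf Y μ θ ^ (1 / 2 : ℝ) := by
  have hcs := integral_mul_le_Lp_mul_Lq_of_nonneg Real.HolderConjugate.two_two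
    (ae_of_all μ fun ω => (exp_pos (θ / 2 * X ω)).le)
    (ae_of_all μ fun ω => (exp_pos (θ / 2 * Y ω)).le)
    (by simpa using memLp_two_exp_half_mul hX hiX) (by simpa using memLp_two_exp_half_mul hY hiY)
  simp only [rpow_two, exp_half_mul_sq] at hcs
  simpa only [mgf, Pi.add_apply, mul_add, exp_add] using hcs

lemma measure_lt_add_le_mgf_mul_mgf [IsFiniteMeasure μ] (hθ : 0 ≤ θ) (x : ℝ)
    (hX : AEMeasurable X μ) (hY : AEMeasurable Y μ)
    (hiX : Integrable (fun ω => exp (θ * X ω)) μ) (hiY : Integrable (fun ω => exp (θ * Y ω)) μ) :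
    μ {ω | x < X ω + Y ω} ≤
      ENNReal.ofReal (mgf X μ θ ^ (1 / 2 : ℝ) * mgf Y μ θ ^ (1 / 2 : ℝ) * exp (-θ * x / 2)) := by
  have hchernoff := measure_ge_le_exp_mul_mgf x (by positivity : 0 ≤ θ / 2)
    (integrable_exp_half_mul_add hX hY hiX hiY)
  calc μ {ω | x < X ω + Y ω} ≤ μ {ω | x ≤ (X + Y) ω} := measure_mono fun ω (h : x < _) => h.le
    _ ≤ _ := by
      rw [← ofReal_measureReal]
      refine ENNReal.ofReal_le_ofReal (hchernoff.trans ?_)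
      rw [mul_comm, show -θ * x / 2 = -(θ / 2) * x by ring]
      exact mul_le_mul_of_nonneg_right (mgf_add_half_le hX hY hiX hiY) (exp_pos _).le

lemma measure_lt_sub_le_of_identDistrib [IsFiniteMeasure μ] {X X' Y Y' : Ω → ℝ} {θ : ℝ}
    (hθ : 0 ≤ θ) (x : ℝ) (hX : IdentDistrib X X' μ μ) (hY : IdentDistrib Y Y' μ μ)
    (hiX : Integrable (fun ω => exp (θ * X' ω)) μ)
    (hiY : Integrable (fun ω => exp (-θ * Y' ω)) μ) :
    μ {ω | x < X ω - Y ω} ≤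
      ENNReal.ofReal (mgf X' μ θ ^ (1 / 2 : ℝ) * mgf Y' μ (-θ) ^ (1 / 2 : ℝ) * exp (-θ * x / 2)) := by
  have hiX : Integrable (fun ω => exp (θ * X ω)) μ :=
    (hX.comp (measurable_const_mul θ).exp).integrable_iff.2 hiX
  have hiY : Integrable (fun ω => exp (-θ * Y ω)) μ :=
    (hY.comp (measurable_const_mul (-θ)).exp).integrable_iff.2 hiY
  replace hiY : Integrable (fun ω => exp (θ * (-Y) ω)) μ := by
    simpa only [Pi.neg_apply, mul_neg, neg_mul] using hiY
  have h := measure_lt_add_le_mgf_mul_mgf hθ x hX.aemeasurable_fst hY.aemeasurable_fst.neg hiX hiY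
  rwa [mgf_congr_identDistrib hX, mgf_neg, mgf_congr_identDistrib hY] at h

end ExpMoments

theorem single_node_backlog_bound_general {Ω : Type*} [MeasurableSpace Ω]
    (μ : Measure Ω) [IsProbabilityMeasure μ]
    (A : ℕ → Ω → ℝ) (S : ℕ → ℕ → Ω → ℝ) (D : ℕ → Ω → ℝ)
    (hAstat : ∀ s t : ℕ, s ≤ t →
      IdentDistrib (fun ω => A t ω - A s ω) (A (t - s)) μ μ)
    (hSstat : ∀ s t : ℕ, s ≤ t → IdentDistrib (S s t) (S 0 (t - s)) μ μ)
    (hD : ∀ ω, ∀ t : ℕ, (⨅ s : Fin (t + 1), (A s ω + S s t ω)) ≤ D t ω)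
    (hintA : ∀ (θ : ℝ) (u : ℕ), Integrable (fun ω => Real.exp (θ * A u ω)) μ)
    (hintS : ∀ (θ : ℝ) (s t : ℕ), Integrable (fun ω => Real.exp (θ * S s t ω)) μ)
    (t : ℕ) (x θ : ℝ) (hθ : 0 < θ) :
    μ {ω | x < A t ω - D t ω} ≤
      ENNReal.ofReal
        ((∑ u ∈ Finset.range (t + 1),
            (∫ ω, Real.exp (θ * A u ω) ∂μ) ^ ((1 : ℝ) / 2) *
              (∫ ω, Real.exp (-θ * S 0 u ω) ∂μ) ^ ((1 : ℝ) / 2)) *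
          Real.exp (-θ * x / 2)) := by
  set c : ℕ → ℝ := fun u => mgf (A u) μ θ ^ (1 / 2 : ℝ) * mgf (S 0 u) μ (-θ) ^ (1 / 2 : ℝ)
  have hc : ∀ u, 0 ≤ c u := fun u =>
    mul_nonneg (rpow_nonneg mgf_nonneg _) (rpow_nonneg mgf_nonneg _)
  have hreflect : ∑ s ∈ Finset.range (t + 1), c (t - s) = ∑ u ∈ Finset.range (t + 1), c u := by
    simpa using Finset.sum_range_reflect c (t + 1)
  calc μ {ω | x < A t ω - D t ω}
      ≤ μ (⋃ s ∈ Finset.range (t + 1), {ω | x < A t ω - A s ω - S s t ω}) :=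
        measure_mono (backlog_subset_biUnion x fun ω => hD ω t)
    _ ≤ ∑ s ∈ Finset.range (t + 1), μ {ω | x < A t ω - A s ω - S s t ω} :=
        measure_biUnion_finset_le _ _
    _ ≤ ∑ s ∈ Finset.range (t + 1), ENNReal.ofReal (c (t - s) * exp (-θ * x / 2)) :=
        Finset.sum_le_sum fun s hs =>
          have hst : s ≤ t := Nat.lt_succ_iff.mp (Finset.mem_range.mp hs)
          measure_lt_sub_le_of_identDistrib hθ.le x (hAstat s t hst) (hSstat s t hst)
            (hintA θ _) (hintS (-θ) 0 _)
    _ = ENNReal.ofReal (∑ s ∈ Finset.range (t + 1), c (t - s) * exp (-θ * x / 2)) :=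
        (ENNReal.ofReal_sum_of_nonneg fun s _ => mul_nonneg (hc _) (exp_pos _).le).symm
    _ = _ := by
        rw [← Finset.sum_mul, hreflect]
        rfl

/-- Single-node backlog tail bound: if `D(t) ≥ inf_{0≤s≤t}(A(s) + S(s,t))`
pathwise, with stationary arrival increments and stationary service, then for
all `θ > 0` and `x ≥ 0`,
`P(A(t) - D(t) > x) ≤ [Σ_{u=0}^t E[e^{θA(u)}]^{1/2} E[e^{-θS(u)}]^{1/2}] e^{-θx/2}`. -/
theorem single_node_backlog_bound {Ω : Type*} [MeasurableSpace Ω]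
    (μ : Measure Ω) [IsProbabilityMeasure μ]
    (A : ℕ → Ω → ℝ) (S : ℕ → ℕ → Ω → ℝ) (D : ℕ → Ω → ℝ)
    (hAmeas : ∀ u, Measurable (A u)) (hSmeas : ∀ s t, Measurable (S s t))
    (hDmeas : ∀ t, Measurable (D t))
    (hAstat : ∀ s t : ℕ, s ≤ t →
      IdentDistrib (fun ω => A t ω - A s ω) (A (t - s)) μ μ)
    (hSstat : ∀ s t : ℕ, s ≤ t → IdentDistrib (S s t) (S 0 (t - s)) μ μ)
    (hD : ∀ ω, ∀ t : ℕ, (⨅ s : Fin (t + 1), (A s ω + S s t ω)) ≤ D t ω)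
    (hintA : ∀ (θ : ℝ) (u : ℕ), Integrable (fun ω => Real.exp (θ * A u ω)) μ)
    (hintS : ∀ (θ : ℝ) (s t : ℕ), Integrable (fun ω => Real.exp (θ * S s t ω)) μ)
    (t : ℕ) (x θ : ℝ) (hθ : 0 < θ) (hx : 0 ≤ x) :
    μ {ω | x < A t ω - D t ω} ≤
      ENNReal.ofReal
        ((∑ u ∈ Finset.range (t + 1),
            (∫ ω, Real.exp (θ * A u ω) ∂μ) ^ ((1 : ℝ) / 2) *
              (∫ ω, Real.exp (-θ * S 0 u ω) ∂μ) ^ ((1 : ℝ) / 2)) *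
          Real.exp (-θ * x / 2)) :=
  single_node_backlog_bound_general μ A S D hAstat hSstat hD hintA hintS t x θ hθ
end

section
/- (Monotonicity of MMOO effective bandwidth) The function α(θ) = (1/(2θ))(Pθ - r_10 - r_01 + √((Pθ - r_10 + r_01)² + 4 r_10 r_01)) is nondecreasing in θ > 0. -/
/-!
Write `θ α(θ) = Λ(θ) := (Pθ - r10 - r01 + √((Pθ - r10 + r01)² + 4 r10 r01)) / 2`. The square root
is the modulus of the complex number `(Pθ - r10 + r01) + 2i√(r10 r01)`, which is affine in `θ`,
so `Λ` is convex; moreover `Λ(0) = 0`. Hence `α(θ) = (Λ(θ) - Λ(0)) / (θ - 0)` is a secant slope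
of a convex function, and those are nondecreasing.
-/

open Set

theorem ConvexOn.monotoneOn_div_self {𝕜 : Type*} [Field 𝕜] [LinearOrder 𝕜]
    [IsStrictOrderedRing 𝕜] {s : Set 𝕜} {f : 𝕜 → 𝕜} (hf : ConvexOn 𝕜 s f) (h0 : 0 ∈ s)
    (hf0 : f 0 = 0) : MonotoneOn (fun x ↦ f x / x) (s \ {0}) := by
  intro x hx y hy hxy
  simpa [hf0] using hf.secant_mono h0 hx.1 hy.1 hx.2 hy.2 hxy

theorem convexOn_univ_norm_smul_add {E : Type*} [SeminormedAddCommGroup E] [NormedSpace ℝ E]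
    (a b : E) : ConvexOn ℝ univ fun t : ℝ ↦ ‖t • a + b‖ :=
  (convexOn_norm convex_univ).comp_affineMap
    ((LinearMap.toSpanSingleton ℝ E a).toAffineMap + AffineMap.const ℝ ℝ b)

theorem convexOn_univ_sqrt_sq_add (p q : ℝ) {c : ℝ} (hc : 0 ≤ c) :
    ConvexOn ℝ univ fun t : ℝ ↦ √((p * t + q) ^ 2 + c) := by
  convert convexOn_univ_norm_smul_add (p : ℂ) (q + √c * Complex.I) using 2 with t
  rw [Complex.norm_eq_sqrt_sq_add_sq]
  simp [Real.sq_sqrt hc, mul_comm]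

theorem mmoo_effective_bandwidth_monotone_general (P r10 r01 : ℝ)
    (h10 : 0 < r10) (h01 : 0 < r01) :
    MonotoneOn (fun θ : ℝ =>
      (1 / (2 * θ)) * (P * θ - r10 - r01 +
        Real.sqrt ((P * θ - r10 + r01) ^ 2 + 4 * r10 * r01)))
      (Set.Ioi (0 : ℝ)) := by
  set Λ : ℝ → ℝ := fun θ ↦
    (P * θ - r10 - r01 + √((P * θ - r10 + r01) ^ 2 + 4 * r10 * r01)) / 2
  have hΛ_convex : ConvexOn ℝ univ Λ := by
    have hsum := ((LinearMap.toSpanSingleton ℝ ℝ P).convexOn convex_univ).add_const (-r10 - r01)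
      |>.add (convexOn_univ_sqrt_sq_add P (-r10 + r01) (by positivity : 0 ≤ 4 * r10 * r01))
      |>.smul (by norm_num : (0 : ℝ) ≤ 1 / 2)
    refine hsum.congr fun θ _ ↦ ?_
    simp only [Λ, Pi.add_apply, LinearMap.toSpanSingleton_apply, smul_eq_mul]
    ring_nf
  have hΛ_zero : Λ 0 = 0 := by
    have hsq : (-r10 + r01) ^ 2 + 4 * r10 * r01 = (r10 + r01) ^ 2 := by ring
    simp [Λ, hsq, Real.sqrt_sq (add_pos h10 h01).le]
  refine (hΛ_convex.monotoneOn_div_self (mem_univ 0) hΛ_zero).congr (fun θ _ ↦ ?_) |>.mono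
    fun θ hθ ↦ ⟨mem_univ θ, hθ.ne'⟩
  simp only [Λ]
  ring

/-- Monotonicity of the MMOO effective bandwidth: the function
`α(θ) = (1/(2θ))(Pθ - r10 - r01 + √((Pθ - r10 + r01)² + 4 r10 r01))`
is nondecreasing on `(0, ∞)`. -/
theorem mmoo_effective_bandwidth_monotone (P r10 r01 : ℝ)
    (hP : 0 < P) (h10 : 0 < r10) (h01 : 0 < r01) :
    MonotoneOn (fun θ : ℝ =>
      (1 / (2 * θ)) * (P * θ - r10 - r01 +
        Real.sqrt ((P * θ - r10 + r01) ^ 2 + 4 * r10 * r01)))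
      (Set.Ioi (0 : ℝ)) :=
  mmoo_effective_bandwidth_monotone_general P r10 r01 h10 h01
end

section
/- (Backlog bound via mgf for a single stationary node with independence) If the arrival process A and service process S at a single node are independent, stationary, with D(t) ≥ (A ⊗ S)(t) pathwise, then P(A(t) - D(t) > x) ≤ [Σ_{u=0}^{t} exp(θu(α(θ,u) - β(θ,u)))] e^{-θx} for any θ > 0, i.e., the Cauchy-Schwarz loss factor of 2 in the exponent is avoided. -/
open MeasureTheory ProbabilityTheory

/-!
A backlog `A t - D t > x` forces `A(s,t) - S(s,t) > x` for some `s ≤ t`, because `D` dominates the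
min-plus convolution `inf_s (A s + S(s,t))`. A union bound over `s` and a Chernoff bound for each
`A(s,t) - S(s,t)` finish the proof. Independence of `A` and `S` makes the moment generating
function of the difference factor exactly as `mgf A(t-s) θ · mgf S(0,t-s) (-θ)`, so no
Cauchy–Schwarz step (and no doubling of `θ`) is needed.
-/

open Real

namespace ProbabilityTheory

variable {Ω : Type*} [MeasurableSpace Ω] {μ : Measure Ω} {X Y : Ω → ℝ} {t : ℝ}

lemma IdentDistrib.mgf_eq {Ω' : Type*} [MeasurableSpace Ω'] {ν : Measure Ω'} {Y : Ω' → ℝ}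
    (h : IdentDistrib X Y μ ν) (t : ℝ) : mgf X μ t = mgf Y ν t :=
  (h.comp (measurable_id.const_mul t).exp).integral_eq

lemma IndepFun.integrable_exp_mul_sub (h : X ⟂ᵢ[μ] Y)
    (hX : Integrable (fun ω => exp (t * X ω)) μ) (hY : Integrable (fun ω => exp (-t * Y ω)) μ) :
    Integrable (fun ω => exp (t * (X - Y) ω)) μ := by
  simp_rw [Pi.sub_apply, mul_sub, exp_sub, div_eq_mul_inv, ← exp_neg, ← neg_mul]
  exact (h.exp_mul t (-t)).integrable_mul hX hY

lemma IndepFun.mgf_sub (h : X ⟂ᵢ[μ] Y)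
    (hX : AEStronglyMeasurable (fun ω => exp (t * X ω)) μ)
    (hY : AEStronglyMeasurable (fun ω => exp (-t * Y ω)) μ) :
    mgf (X - Y) μ t = mgf X μ t * mgf Y μ (-t) := by
  rw [sub_eq_add_neg, ← mgf_neg]
  refine (h.comp measurable_id measurable_neg).mgf_add hX ?_
  simpa only [Function.comp_apply, mul_neg, neg_mul] using hY

lemma IndepFun.measureReal_lt_sub_le_exp_mul_mgf_mul_mgf [IsFiniteMeasure μ] (h : X ⟂ᵢ[μ] Y)
    (ht : 0 ≤ t) (hX : Integrable (fun ω => exp (t * X ω)) μ)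
    (hY : Integrable (fun ω => exp (-t * Y ω)) μ) (ε : ℝ) :
    μ.real {ω | ε < X ω - Y ω} ≤ exp (-t * ε) * (mgf X μ t * mgf Y μ (-t)) := by
  rw [← h.mgf_sub hX.aestronglyMeasurable hY.aestronglyMeasurable]
  have hsub : {ω | ε < X ω - Y ω} ⊆ {ω | ε ≤ (X - Y) ω} := fun ω (hω : ε < X ω - Y ω) => hω.le
  exact (measureReal_mono hsub).trans <|
    measure_ge_le_exp_mul_mgf (X := X - Y) ε ht (h.integrable_exp_mul_sub hX hY)

end ProbabilityTheory

lemma setOf_lt_sub_subset_iUnion_of_iInf_le {Ω : Type*} {A : ℕ → Ω → ℝ} {S : ℕ → ℕ → Ω → ℝ}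
    {D : ℕ → Ω → ℝ} {t : ℕ} (hD : ∀ ω, (⨅ s : Fin (t + 1), (A s ω + S s t ω)) ≤ D t ω) (x : ℝ) :
    {ω | x < A t ω - D t ω} ⊆ ⋃ s : Fin (t + 1), {ω | x < (A t ω - A s ω) - S s t ω} := by
  rintro ω (hω : x < A t ω - D t ω)
  obtain ⟨s, hs⟩ : ∃ s : Fin (t + 1), A s ω + S s t ω < A t ω - x :=
    exists_lt_of_ciInf_lt ((hD ω).trans_lt (by linarith))
  exact Set.mem_iUnion.2 ⟨s, show x < _ by linarith⟩

lemma Fin.sum_univ_sub_eq_sum_range {M : Type*} [AddCommMonoid M] (f : ℕ → M) (t : ℕ) :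
    ∑ s : Fin (t + 1), f (t - s) = ∑ u ∈ Finset.range (t + 1), f u := by
  rw [Fin.sum_univ_eq_sum_range (fun s => f (t - s)), ← Finset.sum_range_reflect]
  refine Finset.sum_congr rfl fun u hu => congrArg f ?_
  have := Finset.mem_range.1 hu
  omega

theorem single_node_backlog_bound_indep_general {Ω : Type*} [MeasurableSpace Ω]
    (μ : Measure Ω) [IsProbabilityMeasure μ]
    (A : ℕ → Ω → ℝ) (S : ℕ → ℕ → Ω → ℝ) (D : ℕ → Ω → ℝ)
    -- independence of the arrival process and the service process
    (hindep : ProbabilityTheory.Indep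
      (MeasurableSpace.comap (fun ω => fun u : ℕ => A u ω) inferInstance)
      (MeasurableSpace.comap (fun ω => fun p : ℕ × ℕ => S p.1 p.2 ω) inferInstance) μ)
    -- stationarity
    (hAstat : ∀ s t : ℕ, s ≤ t →
      IdentDistrib (fun ω => A t ω - A s ω) (A (t - s)) μ μ)
    (hSstat : ∀ s t : ℕ, s ≤ t → IdentDistrib (S s t) (S 0 (t - s)) μ μ)
    -- dynamic server property
    (hD : ∀ ω, ∀ t : ℕ, (⨅ s : Fin (t + 1), (A s ω + S s t ω)) ≤ D t ω)
    (hintA : ∀ (θ : ℝ) (u : ℕ), Integrable (fun ω => Real.exp (θ * A u ω)) μ)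
    (hintS : ∀ (θ : ℝ) (s t : ℕ), Integrable (fun ω => Real.exp (θ * S s t ω)) μ)
    (α β : ℝ → ℕ → ℝ)
    (hα : ∀ θ > (0 : ℝ), ∀ u : ℕ,
      Real.exp (θ * u * α θ u) = ∫ ω, Real.exp (θ * A u ω) ∂μ)
    (hβ : ∀ θ > (0 : ℝ), ∀ u : ℕ,
      Real.exp (-(θ * u * β θ u)) = ∫ ω, Real.exp (-θ * S 0 u ω) ∂μ)
    (t : ℕ) (θ x : ℝ) (hθ : 0 < θ) :
    μ {ω | x < A t ω - D t ω} ≤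
      ENNReal.ofReal
        ((∑ u ∈ Finset.range (t + 1),
            Real.exp (θ * u * (α θ u - β θ u))) * Real.exp (-θ * x)) := by
  have hAS : (fun ω u => A u ω) ⟂ᵢ[μ] (fun ω (p : ℕ × ℕ) => S p.1 p.2 ω) :=
    (IndepFun_iff_Indep _ _ μ).2 hindep
  have hmgf (u : ℕ) : exp (θ * u * (α θ u - β θ u)) = mgf (A u) μ θ * mgf (S 0 u) μ (-θ) := by
    rw [mul_sub, sub_eq_add_neg, exp_add, hα θ hθ u, hβ θ hθ u]; rfl
  have hterm (s : Fin (t + 1)) : μ.real {ω | x < (A t ω - A s ω) - S s t ω} ≤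
      exp (θ * ↑(t - s) * (α θ (t - s) - β θ (t - s))) * exp (-θ * x) := by
    have hst : (s : ℕ) ≤ t := Nat.lt_succ_iff.mp s.isLt
    have hXY : (fun ω => A t ω - A s ω) ⟂ᵢ[μ] S s t :=
      hAS.comp ((measurable_pi_apply t).sub (measurable_pi_apply (s : ℕ)))
        (measurable_pi_apply ((s : ℕ), t))
    rw [hmgf, mul_comm, ← (hAstat s t hst).mgf_eq, ← (hSstat s t hst).mgf_eq]
    refine hXY.measureReal_lt_sub_le_exp_mul_mgf_mul_mgf hθ.le ?_ ?_ x
    · exact ((hAstat s t hst).comp (measurable_id.const_mul θ).exp).integrable_iff.2 (hintA θ _)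
    · exact hintS (-θ) s t
  rw [← ofReal_measureReal]
  refine ENNReal.ofReal_le_ofReal ?_
  calc μ.real {ω | x < A t ω - D t ω}
      ≤ ∑ s : Fin (t + 1), μ.real {ω | x < (A t ω - A s ω) - S s t ω} :=
        (measureReal_mono (setOf_lt_sub_subset_iUnion_of_iInf_le (hD · t) x)).trans
          (measureReal_iUnion_fintype_le _)
    _ ≤ _ := by
        rw [← Fin.sum_univ_sub_eq_sum_range, Finset.sum_mul]
        exact Finset.sum_le_sum fun s _ => hterm s

/-- Single-node backlog bound with independence: if the arrival process `A`
and the service process `S` at a single node are independent and stationary,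
with `D(t) ≥ (A ⊗ S)(t)` pathwise, then for any `θ > 0` and `x ≥ 0`,
`P(A(t) - D(t) > x) ≤ [Σ_{u=0}^t e^{θu(α(θ,u) - β(θ,u))}] e^{-θx}`,
avoiding the Cauchy–Schwarz loss factor of 2 in the exponent. -/
theorem single_node_backlog_bound_indep {Ω : Type*} [MeasurableSpace Ω]
    (μ : Measure Ω) [IsProbabilityMeasure μ]
    (A : ℕ → Ω → ℝ) (S : ℕ → ℕ → Ω → ℝ) (D : ℕ → Ω → ℝ)
    (hAmeas : ∀ u, Measurable (A u)) (hSmeas : ∀ s t, Measurable (S s t))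
    (hDmeas : ∀ t, Measurable (D t))
    -- independence of the arrival process and the service process
    (hindep : ProbabilityTheory.Indep
      (MeasurableSpace.comap (fun ω => fun u : ℕ => A u ω) inferInstance)
      (MeasurableSpace.comap (fun ω => fun p : ℕ × ℕ => S p.1 p.2 ω) inferInstance) μ)
    -- stationarity
    (hAstat : ∀ s t : ℕ, s ≤ t →
      IdentDistrib (fun ω => A t ω - A s ω) (A (t - s)) μ μ)
    (hSstat : ∀ s t : ℕ, s ≤ t → IdentDistrib (S s t) (S 0 (t - s)) μ μ)
    -- dynamic server property
    (hD : ∀ ω, ∀ t : ℕ, (⨅ s : Fin (t + 1), (A s ω + S s t ω)) ≤ D t ω)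
    (hintA : ∀ (θ : ℝ) (u : ℕ), Integrable (fun ω => Real.exp (θ * A u ω)) μ)
    (hintS : ∀ (θ : ℝ) (s t : ℕ), Integrable (fun ω => Real.exp (θ * S s t ω)) μ)
    (α β : ℝ → ℕ → ℝ)
    (hα : ∀ θ > (0 : ℝ), ∀ u : ℕ,
      Real.exp (θ * u * α θ u) = ∫ ω, Real.exp (θ * A u ω) ∂μ)
    (hβ : ∀ θ > (0 : ℝ), ∀ u : ℕ,
      Real.exp (-(θ * u * β θ u)) = ∫ ω, Real.exp (-θ * S 0 u ω) ∂μ)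
    (t : ℕ) (θ x : ℝ) (hθ : 0 < θ) (hx : 0 ≤ x) :
    μ {ω | x < A t ω - D t ω} ≤
      ENNReal.ofReal
        ((∑ u ∈ Finset.range (t + 1),
            Real.exp (θ * u * (α θ u - β θ u))) * Real.exp (-θ * x)) :=
  single_node_backlog_bound_indep_general μ A S D hindep hAstat hSstat hD hintA hintS α β hα hβ t θ
    x hθ
end
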